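/- arXiv:1402.5245 — 8 statements merged into one kernel-verified Lean document; each statement's English description precedes it below -/
import Mathlib

section
/- For every c ≥ 1 and n ≥ c, the alternating sum over i from 0 to c-1 of (-1)^{c-1-i} · binomial(n-i-1, n-c) · binomial(n, i) equals 1. -/
/-! Upper negation gives `(-1)^j * C(m+j, m) = C(-(m+1), j)` for the generalized binomial
coefficient on `ℤ`, so the sum is a Chu–Vandermonde convolution of `C(n, ·)` with
`C(-(n-c+1), ·)` at `c - 1`; it equals `C(c-1, c-1) = 1`. -/

open Finset

theorem Ring.choose_neg_natCast_succ (m j : ℕ) :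
    Ring.choose (-((m : ℤ) + 1)) j = (-1) ^ j * ((m + j).choose m) := by
  rw [Ring.choose_neg, show (m : ℤ) + 1 + j - 1 = ((m + j : ℕ) : ℤ) by push_cast; ring,
    Ring.choose_natCast, Nat.choose_symm_add, Units.smul_def, Int.coe_negOnePow_natCast,
    smul_eq_mul]

theorem Int.sum_range_neg_one_pow_mul_choose_mul_choose (n m k : ℕ) :
    ∑ i ∈ Finset.range (k + 1), (-1 : ℤ) ^ (k - i) * ((m + k - i).choose m) * (n.choose i) =
      Ring.choose ((n : ℤ) - (m + 1)) k := by
  rw [sub_eq_add_neg, Ring.add_choose_eq k (Commute.all _ _),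
    Nat.sum_antidiagonal_eq_sum_range_succ
      (fun i j => Ring.choose (n : ℤ) i * Ring.choose (-((m : ℤ) + 1)) j)]
  refine sum_congr rfl fun i hi => ?_
  rw [Ring.choose_natCast, Ring.choose_neg_natCast_succ,
    Nat.add_sub_assoc (by simpa [Nat.lt_succ_iff] using hi)]
  ring

theorem stmt1 (c n : ℕ) (hc : 1 ≤ c) (hcn : c ≤ n) :
    ∑ i ∈ Finset.range c,
      (-1 : ℤ) ^ (c - 1 - i) * ((n - i - 1).choose (n - c)) * (n.choose i) = 1 := by
  have h := Int.sum_range_neg_one_pow_mul_choose_mul_choose n (n - c) (c - 1)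
  rw [Nat.sub_add_cancel hc, show (n : ℤ) - ((n - c : ℕ) + 1) = ((c - 1 : ℕ) : ℤ) by omega,
    Ring.choose_natCast, Nat.choose_self, Nat.cast_one] at h
  refine (sum_congr rfl fun i _ => ?_).trans h
  rw [show n - c + (c - 1) - i = n - i - 1 by omega]
end

section
/- For every c ≥ 1, every n ≥ c, all p_1,...,p_n ∈ (0,1) with p_1 + ... + p_n ≤ 1, setting p_0 = 1 - (p_1+...+p_n), and for every k ∈ {1, 2, ..., c}, the alternating sum over i from 0 to c-1 of (-1)^{c-1-i} · binomial(n-i-1, n-c) · (sum over subsets J ⊆ {1,...,n} with |J| = i of (p_0 + P_J)^{k-1}) equals 1, where P_J = ∑_{j∈J} p_j. -/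
/-!
The weighted layer sum `F ↦ ∑ᵢ (-1)^(c-1-i) C(n-i-1, n-c) ∑_{|J|=i} F J` is linear in `F`,
and a Chu–Vandermonde identity with a negative upper index shows that it takes the value `1` on
every indicator `J ↦ [T ⊆ J]` with `|T| < c`. A power `P_J^r` is a sum, over maps
`g : Fin r → s`, of such indicators (with `T` the image of `g`), so for every polynomial `P` of
degree `< c` the layer sum of `J ↦ P(P_J)` is `P(P_s)`. For `P = (p₀ + X)^(k-1)` this value is
`(p₀ + P_s)^(k-1) = 1`.
-/

open Finset

-- `(-1)^r C(q+r, q)` is `Ring.choose (-(q+1)) r`, and `(e+1+q) + (-(q+1)) = e`.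
theorem Int.sum_antidiagonal_choose_mul_neg_one_pow_choose (e q : ℕ) :
    ∑ ij ∈ antidiagonal e,
      ((e + 1 + q).choose ij.1 : ℤ) * ((-1) ^ ij.2 * (q + ij.2).choose q) = 1 := by
  have vandermonde := Ring.add_choose_eq (r := ((e + 1 + q : ℕ) : ℤ))
    (s := -((q + 1 : ℕ) : ℤ)) e (Commute.all _ _)
  rw [show ((e + 1 + q : ℕ) : ℤ) + -((q + 1 : ℕ) : ℤ) = (e : ℤ) by push_cast; ring,
    Ring.choose_natCast, Nat.choose_self, Nat.cast_one] at vandermonde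
  refine Eq.trans (sum_congr rfl fun ij _ => ?_) vandermonde.symm
  rw [Ring.choose_natCast, Ring.choose_neg,
    show ((q + 1 : ℕ) : ℤ) + ij.2 - 1 = ((q + ij.2 : ℕ) : ℤ) by push_cast; ring,
    Ring.choose_natCast, Int.negOnePow_def, Nat.choose_symm_add]
  simp [Units.smul_def]

variable {ι R : Type*} [CommRing R]

def alternatingLayerSum (c : ℕ) (s : Finset ι) (F : Finset ι → R) : R :=
  ∑ i ∈ range c, (-1) ^ (c - 1 - i) * ((#s - i - 1).choose (#s - c) : R) *
    ∑ J ∈ powersetCard i s, F J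

theorem alternatingLayerSum_congr {c : ℕ} {s : Finset ι} {F G : Finset ι → R}
    (h : ∀ J ⊆ s, F J = G J) : alternatingLayerSum c s F = alternatingLayerSum c s G :=
  sum_congr rfl fun _ _ => congrArg _ (sum_congr rfl fun J hJ => h J (mem_powersetCard.1 hJ).1)

theorem alternatingLayerSum_sum_mul {α : Type*} (c : ℕ) (s : Finset ι) (G : Finset α)
    (a : α → R) (F : α → Finset ι → R) :
    alternatingLayerSum c s (fun J => ∑ g ∈ G, a g * F g J) =
      ∑ g ∈ G, a g * alternatingLayerSum c s (F g) := by
  simp only [alternatingLayerSum, mul_sum]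
  rw [sum_comm]
  refine sum_congr rfl fun i _ => ?_
  rw [sum_comm]
  exact sum_congr rfl fun g _ => sum_congr rfl fun J _ => by ring

theorem alternatingLayerSum_indicator_subset [DecidableEq ι] {c : ℕ} {s T : Finset ι}
    (hTs : T ⊆ s) (hTc : #T < c) (hcs : c ≤ #s) :
    alternatingLayerSum c s (fun J => if T ⊆ J then (1 : R) else 0) = 1 := by
  obtain ⟨e, rfl⟩ : ∃ e, c = #T + (e + 1) := ⟨c - #T - 1, by omega⟩
  obtain ⟨q, hq⟩ : ∃ q, #s = #T + (e + 1) + q := ⟨#s - (#T + (e + 1)), by omega⟩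
  simp only [alternatingLayerSum, sum_boole]
  rw [sum_range_add, sum_eq_zero fun i hi => ?_, zero_add]
  · have h :=
      congrArg (Int.cast : ℤ → R) (Int.sum_antidiagonal_choose_mul_neg_one_pow_choose e q)
    push_cast [Nat.sum_antidiagonal_eq_sum_range_succ
      (fun i j => ((e + 1 + q).choose i : R) * ((-1) ^ j * (q + j).choose q))] at h
    refine Eq.trans (sum_congr rfl fun j hj => ?_) h
    rw [mem_range] at hj
    rw [card_filter_powersetCard_subset T s _ hTs (by omega), hq,
      show #T + (e + 1) + q - (#T + j) - 1 = q + (e - j) by omega,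
      show #T + (e + 1) + q - (#T + (e + 1)) = q by omega,
      show #T + (e + 1) + q - #T = e + 1 + q by omega, show #T + j - #T = j by omega,
      show #T + (e + 1) - 1 - (#T + j) = e - j by omega]
    ring
  · rw [filter_eq_empty_iff.2 fun J hJ hTJ => ?_, card_empty, Nat.cast_zero, mul_zero]
    have := card_le_card hTJ
    rw [(mem_powersetCard.1 hJ).2] at this
    rw [mem_range] at hi
    omega

theorem alternatingLayerSum_pow_sum [DecidableEq ι] {c r : ℕ} {s : Finset ι} (x : ι → R)
    (hr : r < c) (hcs : c ≤ #s) :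
    alternatingLayerSum c s (fun J => (∑ j ∈ J, x j) ^ r) = (∑ j ∈ s, x j) ^ r := by
  have expand : ∀ J ⊆ s, (∑ j ∈ J, x j) ^ r = ∑ g ∈ Fintype.piFinset fun _ : Fin r => s,
      (∏ k, x (g k)) * if univ.image g ⊆ J then 1 else 0 := by
    intro J hJ
    simp only [sum_pow', mul_boole]
    rw [← sum_filter]
    congr 1
    ext g
    simp only [Fintype.mem_piFinset, mem_filter, image_subset_iff, mem_univ, forall_const]
    exact ⟨fun h => ⟨fun k => hJ (h k), h⟩, And.right⟩
  rw [alternatingLayerSum_congr expand, alternatingLayerSum_sum_mul, sum_pow']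
  refine sum_congr rfl fun g hg => ?_
  rw [alternatingLayerSum_indicator_subset, mul_one]
  · simpa [image_subset_iff] using hg
  · exact (card_image_le.trans (card_fin r).le).trans_lt hr
  · exact hcs

open Polynomial in
theorem alternatingLayerSum_eval_sum [DecidableEq ι] {c : ℕ} {s : Finset ι} (x : ι → R)
    {P : R[X]} (hP : P.natDegree < c) (hcs : c ≤ #s) :
    alternatingLayerSum c s (fun J => P.eval (∑ j ∈ J, x j)) = P.eval (∑ j ∈ s, x j) := by
  simp only [eval_eq_sum_range' hP]
  rw [alternatingLayerSum_sum_mul]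
  exact sum_congr rfl fun r hr => by rw [alternatingLayerSum_pow_sum x (mem_range.1 hr) hcs]

open Polynomial in
theorem stmt2_general (c n : ℕ) (hc : 1 ≤ c) (hcn : c ≤ n) (p : ℕ → ℝ)
    (k : ℕ) (hkc : k ≤ c) :
    ∑ i ∈ Finset.range c, (-1 : ℝ) ^ (c - 1 - i) * ((n - i - 1).choose (n - c)) *
      ∑ J ∈ Finset.powersetCard i (Finset.Icc 1 n),
        ((1 - ∑ j ∈ Finset.Icc 1 n, p j) + ∑ j ∈ J, p j) ^ (k - 1) = 1 := by
  have hdeg : ((C (1 - ∑ j ∈ Icc 1 n, p j) + X) ^ (k - 1)).natDegree < c :=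
    (natDegree_pow_le_of_le _ (natDegree_C_add.trans natDegree_X).le).trans_lt (by omega)
  have h := alternatingLayerSum_eval_sum (s := Icc 1 n) p hdeg (by simpa using hcn)
  simp only [alternatingLayerSum, Nat.card_Icc, add_tsub_cancel_right, eval_pow, eval_add, eval_C,
    eval_X, sub_add_cancel, one_pow] at h
  exact h

theorem stmt2 (c n : ℕ) (hc : 1 ≤ c) (hcn : c ≤ n) (p : ℕ → ℝ)
    (hp : ∀ j ∈ Finset.Icc 1 n, p j ∈ Set.Ioo (0 : ℝ) 1)
    (hsum : ∑ j ∈ Finset.Icc 1 n, p j ≤ 1)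
    (k : ℕ) (hk1 : 1 ≤ k) (hkc : k ≤ c) :
    ∑ i ∈ Finset.range c, (-1 : ℝ) ^ (c - 1 - i) * ((n - i - 1).choose (n - c)) *
      ∑ J ∈ Finset.powersetCard i (Finset.Icc 1 n),
        ((1 - ∑ j ∈ Finset.Icc 1 n, p j) + ∑ j ∈ J, p j) ^ (k - 1) = 1 :=
  stmt2_general c n hc hcn p k hkc
end

section
/- Let f be a convex function on an interval I and let x, y, z, t ∈ I with x < y, x < z, y < t, z < t. Then (t-y)f(z) + (z-x)f(y) ≤ (t-y)f(x) + (z-x)f(t). If moreover t + x = y + z, then f(z) + f(y) ≤ f(x) + f(t). -/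
/-!
Convexity on `[x, t]` bounds `f y` and `f z` by the chord through `(x, f x)` and `(t, f t)`.
Weighting the two chord inequalities by `t - y` and `z - x` and adding, the coefficients of
`f x` and `f t` on the right both acquire the common factor `t - x`, which cancels.
-/

section

variable {𝕜 : Type*} [Field 𝕜] [LinearOrder 𝕜] [IsStrictOrderedRing 𝕜] {s : Set 𝕜} {f : 𝕜 → 𝕜}
  {x y z t : 𝕜}

theorem ConvexOn.mul_add_mul_le_of_lt (hf : ConvexOn 𝕜 s f) (hx : x ∈ s) (ht : t ∈ s)
    (hxy : x < y) (hxz : x < z) (hyt : y < t) (hzt : z < t) :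
    (t - y) * f z + (z - x) * f y ≤ (t - y) * f x + (z - x) * f t := by
  have chord_y := hf.secant_mono_aux1 hx ht hxy hyt
  have chord_z := hf.secant_mono_aux1 hx ht hxz hzt
  have hxt : 0 < t - x := by linarith
  refine le_of_mul_le_mul_left ?_ hxt
  linear_combination (t - y) * chord_z + (z - x) * chord_y

theorem ConvexOn.add_le_add_of_add_eq (hf : ConvexOn 𝕜 s f) (hx : x ∈ s) (ht : t ∈ s)
    (hxy : x < y) (hxz : x < z) (hyt : y < t) (hzt : z < t) (hsum : t + x = y + z) :
    f z + f y ≤ f x + f t := by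
  have h := hf.mul_add_mul_le_of_lt hx ht hxy hxz hyt hzt
  rw [show t - y = z - x by linarith, ← mul_add, ← mul_add] at h
  exact le_of_mul_le_mul_left h (by linarith)

end

theorem stmt4_general (I : Set ℝ) (f : ℝ → ℝ) (hf : ConvexOn ℝ I f)
    (x y z t : ℝ) (hx : x ∈ I) (ht : t ∈ I)
    (hxy : x < y) (hxz : x < z) (hyt : y < t) (hzt : z < t) :
    (t - y) * f z + (z - x) * f y ≤ (t - y) * f x + (z - x) * f t ∧
    (t + x = y + z → f z + f y ≤ f x + f t) :=
  ⟨hf.mul_add_mul_le_of_lt hx ht hxy hxz hyt hzt,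
    hf.add_le_add_of_add_eq hx ht hxy hxz hyt hzt⟩

theorem stmt4 (I : Set ℝ) (f : ℝ → ℝ) (hf : ConvexOn ℝ I f)
    (x y z t : ℝ) (hx : x ∈ I) (hy : y ∈ I) (hz : z ∈ I) (ht : t ∈ I)
    (hxy : x < y) (hxz : x < z) (hyt : y < t) (hzt : z < t) :
    (t - y) * f z + (z - x) * f y ≤ (t - y) * f x + (z - x) * f t ∧
    (t + x = y + z → f z + f y ≤ f x + f t) :=
  stmt4_general I f hf x y z t hx ht hxy hxz hyt hzt
end

section
/- For every n ≥ 1 and every natural number k, the function F_{n,k}(x) = -(n-1)x^k + n(x + (1-x)/n)^k is monotonically increasing on the interval [0,1]. -/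
/-! Writing `t = 1 - 1/n`, the point `x + (1 - x)/n = t x + (1 - t)` lies between `x` and `1`, and
`F_{n,k} = n ((t x + 1 - t)^k - t x^k)`. The derivative of the bracket is `k t (y^(k-1) - x^(k-1))`
with `y = t x + 1 - t ≥ x ≥ 0`, hence nonnegative. -/

open Set

theorem hasDerivAt_pow_convexComb_sub_mul_pow (k : ℕ) (t a x : ℝ) :
    HasDerivAt (fun x : ℝ => (t * x + (1 - t) * a) ^ k - t * x ^ k)
      (k * t * ((t * x + (1 - t) * a) ^ (k - 1) - x ^ (k - 1))) x := by
  have hcomb : HasDerivAt (fun x : ℝ => t * x + (1 - t) * a) t x := by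
    simpa using ((hasDerivAt_id x).const_mul t).add_const ((1 - t) * a)
  refine ((hcomb.fun_pow k).sub ((hasDerivAt_pow k x).const_mul t)).congr_deriv ?_
  ring

theorem monotoneOn_pow_convexComb_sub_mul_pow (k : ℕ) {t a : ℝ} (ht₀ : 0 ≤ t) (ht₁ : t ≤ 1) :
    MonotoneOn (fun x : ℝ => (t * x + (1 - t) * a) ^ k - t * x ^ k) (Icc 0 a) := by
  refine monotoneOn_of_hasDerivWithinAt_nonneg (convex_Icc 0 a) (by fun_prop)
    (fun x _ => (hasDerivAt_pow_convexComb_sub_mul_pow k t a x).hasDerivWithinAt) ?_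
  rintro x hx
  obtain ⟨hx₀, hxa⟩ : 0 < x ∧ x < a := by rwa [interior_Icc] at hx
  have hle : x ≤ t * x + (1 - t) * a := by
    nlinarith [mul_nonneg (sub_nonneg.2 ht₁) (sub_nonneg.2 hxa.le)]
  have hpow : x ^ (k - 1) ≤ (t * x + (1 - t) * a) ^ (k - 1) := pow_le_pow_left₀ hx₀.le hle _
  have := sub_nonneg.2 hpow
  positivity

theorem stmt6 (n : ℕ) (hn : 1 ≤ n) (k : ℕ) :
    MonotoneOn (fun x : ℝ => -((n : ℝ) - 1) * x ^ k + n * (x + (1 - x) / n) ^ k)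
      (Set.Icc (0 : ℝ) 1) := by
  have hn₀ : (n : ℝ) ≠ 0 := by positivity
  have hF : (fun x : ℝ => -((n : ℝ) - 1) * x ^ k + n * (x + (1 - x) / n) ^ k) =
      fun x : ℝ =>
        (n : ℝ) * (((1 - 1 / n) * x + (1 - (1 - 1 / n)) * 1) ^ k - (1 - 1 / n) * x ^ k) := by
    ext x
    field_simp
    ring
  have ht₀ : 0 ≤ 1 - 1 / (n : ℝ) :=
    sub_nonneg.2 (div_le_one_of_le₀ (by exact_mod_cast hn) n.cast_nonneg)
  rw [hF]
  exact (monotone_mul_left_of_nonneg n.cast_nonneg).comp_monotoneOn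
    (monotoneOn_pow_convexComb_sub_mul_pow k ht₀ (by simp [n.cast_nonneg]))
end

section
/- For every n ≥ 2, every natural number k, and every p_0 ∈ [0,1], we have -(n-1)p_0^k + n(p_0 + (1-p_0)/n)^k ≥ -(n-1)·0^k + n·(1/n)^k, i.e. the tail probability of the time to collect 2 distinct coupons under the almost-uniform distribution with null-coupon probability p_0 is at least that under the uniform distribution (p_0 = 0). -/
/-!
Write `a = 1/n` and `b = p₀ + (1 - p₀)/n`, so that `n (b - a) = (n - 1) p₀`. Factoring both
differences of powers as `x^k - y^k = (x - y) ∑ xⁱ y^(k-1-i)`, the claim becomes a comparison of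
the two geometric sums, which holds termwise because `p₀ ≤ b` and `0 ≤ a`.
-/

open Finset

section geomSum

variable {R : Type*} [CommRing R] [PartialOrder R] [IsOrderedRing R]

theorem geom_sum₂_le_geom_sum₂ {x y x' y' : R} (hx : 0 ≤ x) (hy : 0 ≤ y) (hxx' : x ≤ x')
    (hyy' : y ≤ y') (k : ℕ) :
    ∑ i ∈ range k, x ^ i * y ^ (k - 1 - i) ≤ ∑ i ∈ range k, x' ^ i * y' ^ (k - 1 - i) :=
  sum_le_sum fun i _ =>
    mul_le_mul (pow_le_pow_left₀ hx hxx' i) (pow_le_pow_left₀ hy hyy' _) (pow_nonneg hy _)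
      (pow_nonneg (hx.trans hxx') i)

theorem mul_pow_sub_pow_le_of_mul_sub_eq {x y x' y' c c' : R} (hx : 0 ≤ x) (hy : 0 ≤ y)
    (hxx' : x ≤ x') (hyy' : y ≤ y') (hgap : 0 ≤ c * (x - y))
    (hscale : c * (x - y) = c' * (x' - y')) (k : ℕ) :
    c * (x ^ k - y ^ k) ≤ c' * (x' ^ k - y' ^ k) := by
  rw [← geom_sum₂_mul, ← geom_sum₂_mul, mul_left_comm, mul_left_comm c', ← hscale]
  exact mul_le_mul_of_nonneg_right (geom_sum₂_le_geom_sum₂ hx hy hxx' hyy' k) hgap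

end geomSum

theorem stmt8 (n : ℕ) (hn : 2 ≤ n) (k : ℕ) (p0 : ℝ) (hp0 : p0 ∈ Set.Icc (0 : ℝ) 1) :
    -((n : ℝ) - 1) * p0 ^ k + n * (p0 + (1 - p0) / n) ^ k ≥
      -((n : ℝ) - 1) * (0 : ℝ) ^ k + n * ((1 : ℝ) / n) ^ k := by
  obtain ⟨hp0_nonneg, hp0_le_one⟩ := hp0
  have hn_one : (1 : ℝ) ≤ n := by exact_mod_cast one_le_two.trans hn
  have hn_pos : (0 : ℝ) < n := zero_lt_one.trans_le hn_one
  have hp0_le : p0 ≤ p0 + (1 - p0) / n := le_add_of_nonneg_right (div_nonneg (sub_nonneg.mpr hp0_le_one) hn_pos.le)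
  have hinv_le : (1 : ℝ) / n ≤ p0 + (1 - p0) / n := by
    calc (1 : ℝ) / n = p0 / n + (1 - p0) / n := by ring
      _ ≤ p0 + (1 - p0) / n := by gcongr; exact div_le_self hp0_nonneg hn_one
  have hscale : ((n : ℝ) - 1) * (p0 - 0) = n * (p0 + (1 - p0) / n - 1 / n) := by
    field_simp
    ring
  have key := mul_pow_sub_pow_le_of_mul_sub_eq hp0_nonneg le_rfl hp0_le (by positivity)
    (mul_nonneg (by linarith) (by linarith)) hscale k
  linarith
end

section
/- For every n ≥ 2 and all p_0, p_1, ..., p_n ∈ (0,1) with p_0 + p_1 + ... + p_n = 1, we have ∑_{ℓ=1}^n p_ℓ/(1-(p_0+p_ℓ)) ≥ n/(n-1), provided 1-(p_0+p_ℓ) > 0 for each ℓ. -/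
open Finset

/- With `q i = S - x i`, each term is `x i / q i = S / q i - 1` and `∑ q i = (#s - 1) S`;
Sedrakyan's form of Cauchy–Schwarz, `#s ^ 2 / ∑ q i ≤ ∑ 1 / q i`, then gives the bound. -/
theorem card_div_card_sub_one_le_sum_div_sum_sub {ι : Type*} (s : Finset ι) (x : ι → ℝ)
    (hs : 2 ≤ #s) (hx : ∀ i ∈ s, x i < ∑ j ∈ s, x j) :
    (#s : ℝ) / (#s - 1) ≤ ∑ i ∈ s, x i / (∑ j ∈ s, x j - x i) := by
  set S := ∑ j ∈ s, x j
  have hk : (1 : ℝ) < #s := by exact_mod_cast hs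
  have hq : ∀ i ∈ s, 0 < S - x i := fun i hi => sub_pos.2 (hx i hi)
  have hq_sum : ∑ i ∈ s, (S - x i) = (#s - 1) * S := by
    rw [sum_sub_distrib, sum_const, nsmul_eq_mul]
    ring
  have hS : 0 < S := by
    have : 0 < ∑ i ∈ s, (S - x i) := sum_pos hq (card_pos.1 (by omega))
    rw [hq_sum] at this
    exact pos_of_mul_pos_right this (by linarith)
  have titu : (#s : ℝ) ^ 2 / ((#s - 1) * S) ≤ ∑ i ∈ s, 1 / (S - x i) := by
    simpa [hq_sum] using sq_sum_div_le_sum_sq_div s (fun _ => (1 : ℝ)) hq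
  calc (#s : ℝ) / (#s - 1)
      = S * ((#s : ℝ) ^ 2 / ((#s - 1) * S)) - #s := by
        field_simp [(sub_pos.2 hk).ne']
        ring
    _ ≤ S * ∑ i ∈ s, 1 / (S - x i) - #s := by gcongr
    _ = ∑ i ∈ s, (S * (1 / (S - x i)) - 1) := by
        rw [sum_sub_distrib, ← mul_sum, sum_const, nsmul_one]
    _ = ∑ i ∈ s, x i / (S - x i) := sum_congr rfl fun i hi => by
        field_simp [(hq i hi).ne']
        ring

theorem stmt11_general (n : ℕ) (hn : 2 ≤ n) (p : ℕ → ℝ)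
    (hsum : ∑ i ∈ Finset.Icc 0 n, p i = 1)
    (hpos : ∀ ℓ ∈ Finset.Icc 1 n, 0 < 1 - (p 0 + p ℓ)) :
    (n : ℝ) / ((n : ℝ) - 1) ≤ ∑ ℓ ∈ Finset.Icc 1 n, p ℓ / (1 - (p 0 + p ℓ)) := by
  have hsum' : ∑ ℓ ∈ Icc 1 n, p ℓ = 1 - p 0 := by
    rw [← insert_Icc_add_one_left_eq_Icc n.zero_le, sum_insert (by simp), zero_add] at hsum
    linarith
  have hcard : #(Icc 1 n) = n := by simp
  have key := card_div_card_sub_one_le_sum_div_sum_sub (Icc 1 n) p (by rwa [hcard])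
    fun ℓ hℓ => by linarith [hpos ℓ hℓ]
  simpa only [hcard, hsum', sub_add_eq_sub_sub] using key

theorem stmt11 (n : ℕ) (hn : 2 ≤ n) (p : ℕ → ℝ)
    (hp : ∀ i ∈ Finset.Icc 0 n, p i ∈ Set.Ioo (0 : ℝ) 1)
    (hsum : ∑ i ∈ Finset.Icc 0 n, p i = 1)
    (hpos : ∀ ℓ ∈ Finset.Icc 1 n, 0 < 1 - (p 0 + p ℓ)) :
    (n : ℝ) / ((n : ℝ) - 1) ≤ ∑ ℓ ∈ Finset.Icc 1 n, p ℓ / (1 - (p 0 + p ℓ)) :=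
  stmt11_general n hn p hsum hpos
end

section
/- Define E(c,n,p) for 1 ≤ c ≤ n and p = (p_1,...,p_n) ∈ (0,1)^n with ∑ p_i ≤ 1 recursively by E(1,n,p) = 1/(1-p_0) where p_0 = 1 - ∑_{i=1}^n p_i, and E(c,n,p) = (1/(1-p_0))(1 + ∑_{ℓ=1}^n p_ℓ · E(c-1, n-1, p^{(ℓ)})) for c ≥ 2, where p^{(ℓ)} is p with entry p_ℓ removed. Then E(c,n,p) ≥ n(H_n - H_{n-c})/(1-p_0) ≥ n(H_n - H_{n-c}). -/
/-!
Write `S = ∑ i, p i = 1 - p₀` and `U c n = n (H_n - H_{n-c})`, so `U c n / S` is the value of `E`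
at the almost-uniform distribution. Induct on `c`: by the induction hypothesis each term of the recursion satisfies
`E (c-1) (n-1) p⁽ˡ⁾ ≥ U (c-1) (n-1) / (S - p_ℓ)`, and Cauchy–Schwarz applied to the numbers
`S - p_ℓ`, whose sum is `(n-1) S`, gives `∑ p_ℓ / (S - p_ℓ) ≥ n / (n-1)`. This is exactly the
factor in the harmonic identity `U c n = 1 + n/(n-1) · U (c-1) (n-1)`. The second inequality is
`S ≤ 1`.
-/

open Finset

lemma harmonic_mono : Monotone harmonic :=
  monotone_nat_of_le_succ fun n => by
    rw [harmonic_succ]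
    exact le_add_of_nonneg_right (by positivity)

lemma cast_harmonic_eq_sum_Icc (n : ℕ) : (harmonic n : ℝ) = ∑ i ∈ Icc 1 n, (1 : ℝ) / i := by
  simp [harmonic_eq_sum_Icc]

lemma card_div_card_sub_one_le_sum_div_sum_sub_s12 {ι : Type*} [Fintype ι] (p : ι → ℝ)
    (h : ∀ i, 0 < ∑ j, p j - p i) :
    (Fintype.card ι : ℝ) / (Fintype.card ι - 1) ≤ ∑ i, p i / (∑ j, p j - p i) := by
  set S := ∑ j, p j
  set N : ℝ := (Fintype.card ι : ℝ)
  cases isEmpty_or_nonempty ι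
  · simp [N]
  have hq_sum : ∑ i, (S - p i) = (N - 1) * S := by
    simp only [sum_sub_distrib, sum_const, card_univ, nsmul_eq_mul]
    ring
  have hpos : 0 < (N - 1) * S := hq_sum ▸ sum_pos (fun i _ => h i) univ_nonempty
  have hN : 0 < N - 1 :=
    (sub_nonneg.2 (Nat.one_le_cast.2 Fintype.card_pos)).lt_of_ne fun h0 => by
      rw [← h0, zero_mul] at hpos
      exact hpos.false
  have hS : 0 < S := pos_of_mul_pos_right hpos hN.le
  have hsed := sq_sum_div_le_sum_sq_div univ (fun _ => (1 : ℝ)) (fun i _ => h i)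
  simp only [sum_const, card_univ, nsmul_eq_mul, mul_one, one_pow, hq_sum] at hsed
  calc N / (N - 1) = S * (N ^ 2 / ((N - 1) * S)) - N := by
        field_simp
        ring
    _ ≤ S * ∑ i, 1 / (S - p i) - N := by gcongr
    _ = ∑ i, p i / (S - p i) := by
        have hN_sum : N = ∑ _i : ι, (1 : ℝ) := by simp [N]
        rw [hN_sum, mul_sum, ← sum_sub_distrib]
        refine sum_congr rfl fun i _ => ?_
        field_simp [(h i).ne']
        ring

noncomputable def uniformCouponTime (c n : ℕ) : ℝ := n * (harmonic n - harmonic (n - c))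

lemma uniformCouponTime_nonneg (c n : ℕ) : 0 ≤ uniformCouponTime c n := by
  have : (harmonic (n - c) : ℝ) ≤ harmonic n := by exact_mod_cast harmonic_mono (n.sub_le c)
  exact mul_nonneg n.cast_nonneg (sub_nonneg.2 this)

lemma uniformCouponTime_one_succ (m : ℕ) : uniformCouponTime 1 (m + 1) = 1 := by
  simp only [uniformCouponTime, Nat.cast_add, Nat.cast_one, harmonic_succ, Rat.cast_add,
    Rat.cast_inv, Rat.cast_natCast, Rat.cast_one, add_tsub_cancel_right, add_sub_cancel_left]
  field_simp

lemma uniformCouponTime_succ_succ (c : ℕ) {m : ℕ} (hm : m ≠ 0) :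
    uniformCouponTime (c + 1) (m + 1) = 1 + (m + 1) / m * uniformCouponTime c m := by
  simp only [uniformCouponTime, Nat.cast_add, Nat.cast_one, harmonic_succ, Rat.cast_add,
    Rat.cast_inv, Rat.cast_natCast, Rat.cast_one, Nat.reduceSubDiff]
  field_simp
  ring

theorem uniformCouponTime_div_sum_le (E : ℕ → (n : ℕ) → (Fin n → ℝ) → ℝ)
    (hE1 : ∀ n (p : Fin n → ℝ), E 1 n p = 1 / ∑ i, p i)
    (hErec : ∀ c n (p : Fin (n + 1) → ℝ), 2 ≤ c →
      E c (n + 1) p = 1 / (∑ i, p i) * (1 + ∑ ℓ, p ℓ * E (c - 1) n (fun j => p (ℓ.succAbove j))))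
    {c : ℕ} (hc : 1 ≤ c) :
    ∀ n, c ≤ n → ∀ p : Fin n → ℝ, (∀ i, 0 < p i) →
      uniformCouponTime c n / ∑ i, p i ≤ E c n p := by
  induction c, hc using Nat.le_induction with
  | base =>
    rintro _ hn p -
    obtain ⟨m, rfl⟩ := Nat.exists_eq_add_of_le' hn
    rw [hE1, uniformCouponTime_one_succ]
  | succ c hc ih =>
    rintro _ hn p hp
    obtain ⟨m, rfl⟩ := Nat.exists_eq_add_of_le' (hc.trans (Nat.le_of_succ_le hn))
    have hm : m ≠ 0 := by omega
    have hsum_succAbove (ℓ : Fin (m + 1)) : ∑ j, p (ℓ.succAbove j) = ∑ i, p i - p ℓ := by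
      rw [Fin.sum_univ_succAbove p ℓ]; ring
    have hsum_succAbove_pos (ℓ : Fin (m + 1)) : 0 < ∑ i, p i - p ℓ := by
      have : Nonempty (Fin m) := ⟨⟨0, Nat.pos_of_ne_zero hm⟩⟩
      exact hsum_succAbove ℓ ▸ sum_pos (fun j _ => hp _) univ_nonempty
    have hS : 0 < ∑ i, p i := sum_pos (fun i _ => hp i) univ_nonempty
    set U := uniformCouponTime c m
    have hE_ge : U * ((m + 1) / m) ≤ ∑ ℓ, p ℓ * E c m (fun j => p (ℓ.succAbove j)) :=
      calc U * ((m + 1) / m) ≤ U * ∑ ℓ, p ℓ / (∑ i, p i - p ℓ) := by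
            gcongr
            · exact uniformCouponTime_nonneg c m
            · simpa using card_div_card_sub_one_le_sum_div_sum_sub_s12 p hsum_succAbove_pos
        _ = ∑ ℓ, p ℓ * (U / (∑ i, p i - p ℓ)) := by
            rw [mul_sum]
            exact sum_congr rfl fun ℓ _ => by ring
        _ ≤ ∑ ℓ, p ℓ * E c m (fun j => p (ℓ.succAbove j)) := by
            gcongr with ℓ
            · exact (hp ℓ).le
            · have := ih m (by omega) (fun j => p (ℓ.succAbove j)) fun j => hp _
              rwa [hsum_succAbove] at this
    rw [hErec _ _ _ (by omega), uniformCouponTime_succ_succ c hm, add_tsub_cancel_right,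
      one_div_mul_eq_div]
    gcongr
    linarith

theorem stmt12 (E : (c : ℕ) → (n : ℕ) → (Fin n → ℝ) → ℝ)
    (hE1 : ∀ (n : ℕ) (p : Fin n → ℝ), E 1 n p = 1 / (1 - (1 - ∑ i, p i)))
    (hErec : ∀ (c n : ℕ) (p : Fin (n + 1) → ℝ), 2 ≤ c →
      E c (n + 1) p = (1 / (1 - (1 - ∑ i, p i))) *
        (1 + ∑ ℓ, p ℓ * E (c - 1) n (fun j => p (ℓ.succAbove j))))
    (c n : ℕ) (hc : 1 ≤ c) (hcn : c ≤ n) (p : Fin n → ℝ)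
    (hp : ∀ i, p i ∈ Set.Ioo (0 : ℝ) 1) (hsum : ∑ i, p i ≤ 1) :
    E c n p ≥ (n : ℝ) * ((∑ i ∈ Finset.Icc 1 n, (1 : ℝ) / i) -
        ∑ i ∈ Finset.Icc 1 (n - c), (1 : ℝ) / i) / (1 - (1 - ∑ i, p i)) ∧
    (n : ℝ) * ((∑ i ∈ Finset.Icc 1 n, (1 : ℝ) / i) -
        ∑ i ∈ Finset.Icc 1 (n - c), (1 : ℝ) / i) / (1 - (1 - ∑ i, p i)) ≥
      (n : ℝ) * ((∑ i ∈ Finset.Icc 1 n, (1 : ℝ) / i) -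
        ∑ i ∈ Finset.Icc 1 (n - c), (1 : ℝ) / i) := by
  simp only [sub_sub_cancel] at hE1 hErec ⊢
  simp only [← cast_harmonic_eq_sum_Icc]
  have hp_pos (i : Fin n) : 0 < p i := (hp i).1
  have : Nonempty (Fin n) := ⟨⟨0, by omega⟩⟩
  have hS : 0 < ∑ i, p i := sum_pos (fun i _ => hp_pos i) univ_nonempty
  exact ⟨uniformCouponTime_div_sum_le E hE1 hErec hc n hcn p hp_pos,
    le_div_self (uniformCouponTime_nonneg c n) hS hsum⟩
end

section
/- For n ≥ 1 and k ≥ n, the probability of having collected all n coupons within k draws under the almost-uniform distribution with null probability p_0 satisfies Pr{T_{n,n}(v) ≤ k} = ∑_{k_0=0}^{k-n} C(k,k_0) p_0^{k_0} (1-p_0)^{k-k_0} · Pr{T_{n,n}(u) ≤ k-k_0}, and consequently Pr{T_{n,n}(v) ≤ k} ≤ Pr{T_{n,n}(u) ≤ k}. -/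
open Finset

/-- Probability that `m` uniform draws from `n` coupons yield all `n` coupons. -/
noncomputable def probFullUniform (n m : ℕ) : ℝ :=
  (1 / (n : ℝ) ^ m) *
    ∑ t ∈ (Finset.Nat.antidiagonalTuple n m).filter (fun t => ∀ i, 0 < t i),
      (m.factorial : ℝ) / ∏ i, ((t i).factorial : ℝ)

/-- Probability that `k` draws, each null with probability `p0` and otherwise uniform over
`n` coupons, yield all `n` coupons (multinomial form). -/
noncomputable def probFullAlmostUniform (n k : ℕ) (p0 : ℝ) : ℝ :=
  ∑ k0 ∈ Finset.range (k - n + 1),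
    ∑ t ∈ (Finset.Nat.antidiagonalTuple n (k - k0)).filter (fun t => ∀ i, 0 < t i),
      ((k.factorial : ℝ) / ((k0.factorial : ℝ) * ∏ i, ((t i).factorial : ℝ))) *
        p0 ^ k0 * ((1 - p0) / n) ^ (k - k0)

/-! Conditioning on the number `k0` of null draws, `k! / (k0! ∏ tᵢ!) = C(k, k0) · (k - k0)! / ∏ tᵢ!`
splits the multinomial law of the almost-uniform draws into a binomial mixture of uniform ones,
which is the identity. The inequality follows because `Pr{T(u) ≤ m}` is nondecreasing in `m` and
the binomial weights sum to at most `1`. -/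

open scoped Nat

section
variable {ι : Type*} [Fintype ι] [DecidableEq ι]

lemma sum_update_succ (s : ι → ℕ) (i : ι) :
    ∑ j, Function.update s i (s i + 1) j = ∑ j, s j + 1 := by
  rw [sum_update_of_mem (mem_univ i), sum_eq_add_sum_sdiff_singleton_of_mem (mem_univ i) s]
  ring

lemma prod_factorial_update_succ (s : ι → ℕ) (i : ι) :
    ∏ j, (Function.update s i (s i + 1) j)! = (s i + 1) * ∏ j, (s j)! := by
  simp_rw [Function.apply_update (fun _ k => k !)]
  rw [prod_update_of_mem (mem_univ i), prod_eq_mul_prod_sdiff_singleton_of_mem (mem_univ i),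
    Nat.factorial_succ, mul_assoc]

end

def positiveCompositions (n m : ℕ) : Finset (Fin n → ℕ) :=
  (Finset.Nat.antidiagonalTuple n m).filter fun t => ∀ i, 0 < t i

lemma mem_positiveCompositions {n m : ℕ} {t : Fin n → ℕ} :
    t ∈ positiveCompositions n m ↔ ∑ i, t i = m ∧ ∀ i, 0 < t i := by
  rw [positiveCompositions, mem_filter, Finset.Nat.mem_antidiagonalTuple]

lemma update_succ_mem_positiveCompositions {n m : ℕ} {s : Fin n → ℕ}
    (hs : s ∈ positiveCompositions n m) (i : Fin n) :
    Function.update s i (s i + 1) ∈ positiveCompositions n (m + 1) := by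
  rw [mem_positiveCompositions] at hs ⊢
  refine ⟨by rw [sum_update_succ, hs.1], fun j => ?_⟩
  rcases eq_or_ne j i with rfl | hj
  · simp
  · simpa [hj] using hs.2 j

-- The number of words of length `m` over `n` letters that use every letter.
noncomputable def multinomialSum (n m : ℕ) : ℝ :=
  ∑ t ∈ positiveCompositions n m, (m ! : ℝ) / ∏ i, ((t i)! : ℝ)

lemma probFullUniform_eq (n m : ℕ) : probFullUniform n m = multinomialSum n m / n ^ m := by
  rw [probFullUniform, multinomialSum, positiveCompositions, one_div_mul_eq_div]

lemma multinomialSum_nonneg (n m : ℕ) : 0 ≤ multinomialSum n m :=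
  sum_nonneg fun _ _ => by positivity

/- Since `t i * (m! / ∏ t!) = m! / ∏ s!` when `t` is `s` with its `i`-th part raised by one,
each of the `n` coordinates `i` gives an injection of compositions of `m` into those of `m + 1`. -/
lemma natCast_mul_multinomialSum_le_succ (n m : ℕ) :
    (n : ℝ) * multinomialSum n m ≤ multinomialSum n (m + 1) := by
  set w : (Fin n → ℕ) → ℝ := fun t => (m ! : ℝ) / ∏ i, ((t i)! : ℝ)
  set bump : Fin n → (Fin n → ℕ) → (Fin n → ℕ) := fun i s => Function.update s i (s i + 1)
  have hsucc : multinomialSum n (m + 1) =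
      ∑ i, ∑ t ∈ positiveCompositions n (m + 1), (t i : ℝ) * w t := by
    rw [multinomialSum, sum_comm]
    refine sum_congr rfl fun t ht => ?_
    rw [← sum_mul, ← Nat.cast_sum, (mem_positiveCompositions.1 ht).1, Nat.factorial_succ]
    push_cast
    ring
  have hbump (i : Fin n) (s : Fin n → ℕ) : (bump i s i : ℝ) * w (bump i s) = w s := by
    have hprod : ∏ j, ((bump i s j)! : ℝ) = (s i + 1) * ∏ j, ((s j)! : ℝ) := by
      exact_mod_cast prod_factorial_update_succ s i
    simp only [w, hprod, bump, Function.update_self]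
    push_cast
    field_simp
  have hinj (i : Fin n) : Set.InjOn (bump i) (positiveCompositions n m) := by
    intro a _ b _ hab
    funext j
    have := congrFun hab j
    rcases eq_or_ne j i with rfl | hj
    · simpa [bump] using this
    · simpa [bump, hj] using this
  have hshift (i : Fin n) : multinomialSum n m ≤
      ∑ t ∈ positiveCompositions n (m + 1), (t i : ℝ) * w t := by
    calc multinomialSum n m
        = ∑ t ∈ (positiveCompositions n m).image (bump i), (t i : ℝ) * w t := by
          rw [sum_image (hinj i)]
          exact sum_congr rfl fun s _ => (hbump i s).symm
      _ ≤ _ := by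
          refine sum_le_sum_of_subset_of_nonneg ?_ fun t _ _ => by positivity
          intro t ht
          obtain ⟨s, hs, rfl⟩ := mem_image.1 ht
          exact update_succ_mem_positiveCompositions hs i
  calc (n : ℝ) * multinomialSum n m = ∑ _i : Fin n, multinomialSum n m := by simp
    _ ≤ _ := sum_le_sum fun i _ => hshift i
    _ = _ := hsucc.symm

lemma probFullUniform_monotone {n : ℕ} (hn : 0 < n) : Monotone (probFullUniform n) := by
  refine monotone_nat_of_le_succ fun m => ?_
  have hn' : (0 : ℝ) < n := by exact_mod_cast hn
  calc probFullUniform n m = n * multinomialSum n m / n ^ (m + 1) := by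
        rw [probFullUniform_eq, pow_succ]
        field_simp
    _ ≤ multinomialSum n (m + 1) / n ^ (m + 1) := by
        gcongr
        exact natCast_mul_multinomialSum_le_succ n m
    _ = probFullUniform n (m + 1) := (probFullUniform_eq n (m + 1)).symm

lemma probFullUniform_nonneg (n m : ℕ) : 0 ≤ probFullUniform n m := by
  rw [probFullUniform_eq]
  exact div_nonneg (multinomialSum_nonneg n m) (by positivity)

lemma probFullAlmostUniform_eq_sum_choose (n k : ℕ) (p0 : ℝ) :
    probFullAlmostUniform n k p0 =
      ∑ k0 ∈ range (k - n + 1),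
        (k.choose k0 : ℝ) * p0 ^ k0 * (1 - p0) ^ (k - k0) * probFullUniform n (k - k0) := by
  refine sum_congr rfl fun k0 hk0 => ?_
  have hk0k : k0 ≤ k := by
    rw [mem_range] at hk0
    omega
  rw [probFullUniform, mul_sum, mul_sum]
  refine sum_congr rfl fun t _ => ?_
  rw [Nat.cast_choose ℝ hk0k, div_pow]
  field_simp

lemma sum_choose_mul_le_of_monotone {p : ℝ} (hp0 : 0 ≤ p) (hp1 : p ≤ 1) {f : ℕ → ℝ}
    (hf : Monotone f) {k : ℕ} (hfk : 0 ≤ f k) {s : Finset ℕ} (hs : s ⊆ range (k + 1)) :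
    ∑ j ∈ s, (k.choose j : ℝ) * p ^ j * (1 - p) ^ (k - j) * f (k - j) ≤ f k := by
  calc ∑ j ∈ s, (k.choose j : ℝ) * p ^ j * (1 - p) ^ (k - j) * f (k - j)
      ≤ ∑ j ∈ s, (k.choose j : ℝ) * p ^ j * (1 - p) ^ (k - j) * f k :=
        sum_le_sum fun j _ => by gcongr; exact hf (Nat.sub_le k j)
    _ = (∑ j ∈ s, p ^ j * (1 - p) ^ (k - j) * (k.choose j : ℝ)) * f k := by
        rw [sum_mul]
        exact sum_congr rfl fun j _ => by ring
    _ ≤ (∑ j ∈ range (k + 1), p ^ j * (1 - p) ^ (k - j) * (k.choose j : ℝ)) * f k := by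
        gcongr
    _ = f k := by rw [← add_pow, add_sub_cancel, one_pow, one_mul]

theorem stmt13_general (n k : ℕ) (hn : 1 ≤ n) (p0 : ℝ)
    (hp0 : p0 ∈ Set.Ico (0 : ℝ) 1) :
    probFullAlmostUniform n k p0 =
      ∑ k0 ∈ Finset.range (k - n + 1),
        (k.choose k0 : ℝ) * p0 ^ k0 * (1 - p0) ^ (k - k0) * probFullUniform n (k - k0) ∧
    probFullAlmostUniform n k p0 ≤ probFullUniform n k := by
  have hsum := probFullAlmostUniform_eq_sum_choose n k p0
  refine ⟨hsum, hsum ▸ ?_⟩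
  exact sum_choose_mul_le_of_monotone hp0.1 hp0.2.le (probFullUniform_monotone hn)
    (probFullUniform_nonneg n k) (range_subset_range.2 (by omega))

theorem stmt13 (n k : ℕ) (hn : 1 ≤ n) (hk : n ≤ k) (p0 : ℝ)
    (hp0 : p0 ∈ Set.Ico (0 : ℝ) 1) :
    probFullAlmostUniform n k p0 =
      ∑ k0 ∈ Finset.range (k - n + 1),
        (k.choose k0 : ℝ) * p0 ^ k0 * (1 - p0) ^ (k - k0) * probFullUniform n (k - k0) ∧
    probFullAlmostUniform n k p0 ≤ probFullUniform n k :=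
  stmt13_general n k hn p0 hp0
end
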